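/- arXiv:1507.05853 — 4 statements merged into one kernel-verified Lean document; each statement's English description precedes it below -/
import Mathlib

section
/- With the hypotheses of the previous setting (a coefficient system F on a tree X with all transition maps injective), if H_0(X, F) = 0 then F(τ) = 0 for every simplex τ. -/
open DirectSum

private lemma edge_repr {V : Type} (G : SimpleGraph V) (e : G.edgeSet) :
    ∃ (a b : V) (hab : G.Adj a b), e = ⟨s(a, b), (G.mem_edgeSet).mpr hab⟩ := by
  obtain ⟨val, he⟩ := e
  induction val using Sym2.ind with
  | _ a b => exact ⟨a, b, he, rfl⟩

/-- In a tree, a nonempty finite set of edges has a vertex `w ≠ v` incident to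
exactly one edge of the set. -/
private lemma tree_leaf {V : Type} [DecidableEq V] (G : SimpleGraph V) (hT : G.IsTree)
    (v : V) (S : Finset G.edgeSet) (hS : S.Nonempty) :
    ∃ (e : G.edgeSet) (w : V), e ∈ S ∧ w ∈ (e : Sym2 V) ∧ w ≠ v ∧
      ∀ e' ∈ S, w ∈ (e' : Sym2 V) → e' = e := by
  classical
  have hconn := hT.isConnected
  set f : G.edgeSet → ℕ := fun e =>
    Sym2.lift ⟨fun a b => max (G.dist v a) (G.dist v b),
      fun a b => max_comm _ _⟩ (e : Sym2 V) with hf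
  obtain ⟨e₀, he₀S, he₀max⟩ := S.exists_max_image f hS
  obtain ⟨a, b, hab, rfl⟩ := edge_repr G e₀
  -- the bound
  have hbound : ∀ e' ∈ S, ∀ u, u ∈ (e' : Sym2 V) →
      G.dist v u ≤ f ⟨s(a, b), (G.mem_edgeSet).mpr hab⟩ := by
    intro e' he' u hu
    refine le_trans ?_ (he₀max e' he')
    obtain ⟨a', b', hab', rfl⟩ := edge_repr G e'
    simp only [hf, Sym2.lift_mk]
    rcases Sym2.mem_iff.mp hu with rfl | rfl
    · exact le_max_left _ _
    · exact le_max_right _ _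
  -- pick the far endpoint w
  have key : ∀ w : V, G.dist v w = f ⟨s(a, b), (G.mem_edgeSet).mpr hab⟩ →
      w ∈ s(a, b) →
      ∃ (e : G.edgeSet) (w' : V), e ∈ S ∧ w' ∈ (e : Sym2 V) ∧ w' ≠ v ∧
        ∀ e' ∈ S, w' ∈ (e' : Sym2 V) → e' = e := by
    intro w hw hwmem
    have hD1 : 1 ≤ G.dist v w := by
      rw [hw, hf]
      simp only [Sym2.lift_mk]
      have hor : v ≠ a ∨ v ≠ b := by
        rcases eq_or_ne v a with rfl | h
        · exact Or.inr (fun h => G.irrefl (h ▸ hab))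
        · exact Or.inl h
      rcases hor with h | h
      · exact le_max_of_le_left (Nat.one_le_iff_ne_zero.mpr
          (fun h0 => h (hconn.dist_eq_zero_iff.mp h0)))
      · exact le_max_of_le_right (Nat.one_le_iff_ne_zero.mpr
          (fun h0 => h (hconn.dist_eq_zero_iff.mp h0)))
    have hwv : w ≠ v := by
      intro h; subst h; simp [SimpleGraph.dist_self] at hD1
    -- for any neighbor u of w with dist v u ≤ dist v w, there's a path v→u avoiding w
    have havoid : ∀ u : V, G.Adj w u → G.dist v u ≤ G.dist v w →
        ∃ p : G.Walk v u, p.IsPath ∧ w ∉ p.support := by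
      intro u hwu hu
      obtain ⟨p, hp, hlen⟩ := (hconn v u).exists_path_of_dist
      refine ⟨p, hp, fun hwp => ?_⟩
      have hsplit := SimpleGraph.Walk.take_spec p hwp
      have hlen2 : (p.takeUntil w hwp).length + (p.dropUntil w hwp).length = p.length := by
        conv_rhs => rw [← hsplit]
        rw [SimpleGraph.Walk.length_append]
      have h1 : G.dist v w ≤ (p.takeUntil w hwp).length := G.dist_le _
      have h2 : G.dist w u ≤ (p.dropUntil w hwp).length := G.dist_le _
      have h3 : 1 ≤ G.dist w u := by
        have hne : w ≠ u := G.ne_of_adj hwu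
        exact Nat.one_le_iff_ne_zero.mpr
          (fun h => hne (hconn.dist_eq_zero_iff.mp h))
      omega
    refine ⟨⟨s(a, b), (G.mem_edgeSet).mpr hab⟩, w, he₀S, hwmem, hwv, ?_⟩
    intro e' he' hwe'
    by_contra hne
    obtain ⟨b₁, hrep₁⟩ := Sym2.mem_iff_exists.mp hwe'
    have hadj₁ : G.Adj w b₁ := by
      have h := e'.2; rw [hrep₁] at h; exact (G.mem_edgeSet).mp h
    obtain ⟨b₂, hrep₂⟩ := Sym2.mem_iff_exists.mp hwmem
    have hadj₂ : G.Adj w b₂ := by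
      have h : s(a, b) ∈ G.edgeSet := (G.mem_edgeSet).mpr hab
      rw [hrep₂] at h; exact (G.mem_edgeSet).mp h
    have hb12 : b₁ ≠ b₂ := by
      intro h
      apply hne
      apply Subtype.ext
      show (e' : Sym2 V) = s(a, b)
      rw [hrep₁, h, hrep₂]
    have hd1 : G.dist v b₁ ≤ G.dist v w := by
      rw [hw]
      exact hbound e' he' b₁ (by rw [hrep₁]; exact Sym2.mem_mk_right w b₁)
    have hd2 : G.dist v b₂ ≤ G.dist v w := by
      rw [hw]
      exact hbound _ he₀S b₂ (by show b₂ ∈ s(a, b); rw [hrep₂]; exact Sym2.mem_mk_right w b₂)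
    obtain ⟨p₁, hp₁, hwp₁⟩ := havoid b₁ hadj₁ hd1
    obtain ⟨p₂, hp₂, hwp₂⟩ := havoid b₂ hadj₂ hd2
    have hq₁ : (SimpleGraph.Walk.cons hadj₁ p₁.reverse).IsPath := by
      refine hp₁.reverse.cons ?_
      rwa [SimpleGraph.Walk.support_reverse, List.mem_reverse]
    have hq₂ : (SimpleGraph.Walk.cons hadj₂ p₂.reverse).IsPath := by
      refine hp₂.reverse.cons ?_
      rwa [SimpleGraph.Walk.support_reverse, List.mem_reverse]
    have hpq := hT.IsAcyclic.path_unique ⟨_, hq₁⟩ ⟨_, hq₂⟩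
    have hwalk : SimpleGraph.Walk.cons hadj₁ p₁.reverse
        = SimpleGraph.Walk.cons hadj₂ p₂.reverse := congrArg Subtype.val hpq
    have hsupp := congrArg SimpleGraph.Walk.support hwalk
    rw [SimpleGraph.Walk.support_cons, SimpleGraph.Walk.support_cons] at hsupp
    have htail := List.tail_eq_of_cons_eq hsupp
    rw [SimpleGraph.Walk.support_eq_cons p₁.reverse,
        SimpleGraph.Walk.support_eq_cons p₂.reverse] at htail
    exact hb12 (List.head_eq_of_cons_eq htail)
  rcases le_total (G.dist v a) (G.dist v b) with h | h
  · exact key b (by simp [hf, Sym2.lift_mk, max_eq_right h])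
      (Sym2.mem_mk_right a b)
  · exact key a (by simp [hf, Sym2.lift_mk, max_eq_left h])
      (Sym2.mem_mk_left a b)

/-- A coefficient system on a tree with injective transition maps
and vanishing `H₀` is identically zero. -/
theorem stmt1 {V : Type} [DecidableEq V] (G : SimpleGraph V) (hT : G.IsTree)
    (R : Type) [CommRing R]
    (F0 : V → Type) [∀ v, AddCommGroup (F0 v)] [∀ v, Module R (F0 v)]
    (F1 : G.edgeSet → Type) [∀ e, AddCommGroup (F1 e)] [∀ e, Module R (F1 e)]
    (r : ∀ (e : G.edgeSet) (v : V), v ∈ (e : Sym2 V) → (F1 e →ₗ[R] F0 v))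
    (hinj : ∀ e v h, Function.Injective (r e v h))
    (d : (⨁ e, F1 e) →ₗ[R] ⨁ v, F0 v)
    (hd : ∀ (a b : V) (hab : G.Adj a b) (f : F1 ⟨s(a, b), (G.mem_edgeSet).mpr hab⟩),
      d (DirectSum.lof R G.edgeSet F1 ⟨s(a, b), (G.mem_edgeSet).mpr hab⟩ f)
        = DirectSum.lof R V F0 a
            (r ⟨s(a, b), (G.mem_edgeSet).mpr hab⟩ a (Sym2.mem_mk_left a b) f)
          + DirectSum.lof R V F0 b
            (r ⟨s(a, b), (G.mem_edgeSet).mpr hab⟩ b (Sym2.mem_mk_right a b) f))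
    (hH0 : Subsingleton ((⨁ v, F0 v) ⧸ LinearMap.range d)) :
    (∀ v : V, ∀ x : F0 v, x = 0) ∧ (∀ e : G.edgeSet, ∀ x : F1 e, x = 0) := by
  classical
  have h0 : ∀ v : V, ∀ x : F0 v, x = 0 := by
    intro v x
    have hmem : DirectSum.lof R V F0 v x ∈ LinearMap.range d :=
      (Submodule.Quotient.mk_eq_zero (LinearMap.range d)).mp (Subsingleton.elim _ _)
    obtain ⟨ξ, hξ⟩ := hmem
    have hξ0 : ξ = 0 := by
      by_contra hne
      have hSne : (DFinsupp.support ξ).Nonempty := by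
        rw [Finset.nonempty_iff_ne_empty, Ne, DFinsupp.support_eq_empty]
        exact hne
      obtain ⟨e₀, w, he₀S, hwmem, hwv, huniq⟩ := tree_leaf G hT v (DFinsupp.support ξ) hSne
      set C := DirectSum.component R V F0 w with hC
      have hrepr : ξ = ∑ e ∈ DFinsupp.support ξ, DirectSum.lof R G.edgeSet F1 e (ξ e) := by
        conv_lhs => rw [← DirectSum.sum_support_of (β := F1) ξ]
        rfl
      have hsum : ∑ e ∈ DFinsupp.support ξ, C (d (DirectSum.lof R G.edgeSet F1 e (ξ e))) = 0 := by
        rw [← map_sum, ← map_sum, ← hrepr, hξ, hC, DirectSum.component.of]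
        rw [dif_neg (fun h => hwv h.symm)]
      rw [Finset.sum_eq_single e₀ ?h1 (fun h => absurd he₀S h)] at hsum
      · -- the term at e₀ is nonzero
        obtain ⟨a, b, hab, rfl⟩ := edge_repr G e₀
        have hab' : a ≠ b := G.ne_of_adj hab
        rw [hd a b hab, map_add, hC, DirectSum.component.of, DirectSum.component.of] at hsum
        have hξe₀ : ξ ⟨s(a, b), (G.mem_edgeSet).mpr hab⟩ ≠ 0 := DFinsupp.mem_support_iff.mp he₀S
        rcases Sym2.mem_iff.mp hwmem with rfl | rfl
        · rw [dif_pos rfl, dif_neg (fun h => hab' h.symm), add_zero] at hsum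
          exact hξe₀ (hinj _ _ _ (by exact hsum.trans (map_zero (r _ _ _)).symm))
        · rw [dif_pos rfl, dif_neg hab', zero_add] at hsum
          exact hξe₀ (hinj _ _ _ (by exact hsum.trans (map_zero (r _ _ _)).symm))
      · intro e heS hee₀
        obtain ⟨a, b, hab, rfl⟩ := edge_repr G e
        have haw : a ≠ w := fun h => hee₀ (huniq _ heS (h ▸ Sym2.mem_mk_left a b))
        have hbw : b ≠ w := fun h => hee₀ (huniq _ heS (h ▸ Sym2.mem_mk_right a b))
        rw [hd a b hab, map_add, hC, DirectSum.component.of, DirectSum.component.of,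
          dif_neg haw, dif_neg hbw, add_zero]
    rw [hξ0, map_zero] at hξ
    have := congrArg (fun y => DirectSum.component R V F0 v y) hξ
    simpa using this.symm
  refine ⟨h0, ?_⟩
  intro e x
  obtain ⟨a, b, hab, rfl⟩ := edge_repr G e
  apply hinj _ a (Sym2.mem_mk_left a b)
  rw [map_zero]
  exact h0 a _
end

section
/- Let X be a tree and F a coefficient system on X with injective transition maps. Suppose c = (c_τ)_τ ∈ ⊕_{edges τ} F(τ) is a 1-chain whose image under the differential ⊕_τ F(τ) → ⊕_x F(x) is supported on a single vertex y (i.e. all components at vertices other than y vanish). Then c = 0. In particular H_1(X, F) = 0 under these hypotheses. -/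
open SimpleGraph

-- dist to y differs for adjacent vertices in a tree
theorem tree_adj_dist_ne {V : Type} [DecidableEq V] {G : SimpleGraph V} (hT : G.IsTree) {x z y : V}
    (h : G.Adj x z) : G.dist x y ≠ G.dist z y := by
  intro heq
  have hconn := hT.isConnected
  rcases Nat.eq_zero_or_pos (G.dist x y) with h0 | hpos
  · have hx : x = y := (hconn.dist_eq_zero_iff).mp h0
    have hz : z = y := (hconn.dist_eq_zero_iff).mp (heq ▸ h0)
    exact G.irrefl (hx ▸ hz ▸ h)
  · obtain ⟨p, hp, hplen⟩ := hconn.exists_path_of_dist z y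
    by_cases hx : x ∈ p.support
    · have h1 := congr_arg SimpleGraph.Walk.length (p.take_spec hx)
      rw [SimpleGraph.Walk.length_append] at h1
      have h2 : G.dist x y ≤ (p.dropUntil x hx).length := SimpleGraph.dist_le _
      have h3 : (p.takeUntil x hx).length = 0 := by omega
      have := SimpleGraph.Walk.eq_of_length_eq_zero h3
      exact G.irrefl (this ▸ h)
    · have hp2 : (SimpleGraph.Walk.cons h p).IsPath := hp.cons hx
      obtain ⟨q, hq, hqlen⟩ := hconn.exists_path_of_dist x y
      have := hT.IsAcyclic.path_unique ⟨q, hq⟩ ⟨SimpleGraph.Walk.cons h p, hp2⟩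
      have hlen := congr_arg (fun w : G.Path x y => w.val.length) this
      simp only [SimpleGraph.Walk.length_cons] at hlen
      omega

-- in a tree each vertex has a unique neighbor strictly closer to y
theorem tree_parent_unique {V : Type} [DecidableEq V] {G : SimpleGraph V} (hT : G.IsTree)
    {x z z' y : V} (hz : G.Adj x z) (hz' : G.Adj x z')
    (hdz : G.dist z y + 1 = G.dist x y) (hdz' : G.dist z' y + 1 = G.dist x y) : z = z' := by
  have hconn := hT.isConnected
  obtain ⟨p, hp, hplen⟩ := hconn.exists_path_of_dist z y
  obtain ⟨p', hp', hplen'⟩ := hconn.exists_path_of_dist z' y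
  have hxp : x ∉ p.support := by
    intro hx
    have h1 := congr_arg SimpleGraph.Walk.length (p.take_spec hx)
    rw [SimpleGraph.Walk.length_append] at h1
    have h2 : G.dist x y ≤ (p.dropUntil x hx).length := SimpleGraph.dist_le _
    omega
  have hxp' : x ∉ p'.support := by
    intro hx
    have h1 := congr_arg SimpleGraph.Walk.length (p'.take_spec hx)
    rw [SimpleGraph.Walk.length_append] at h1
    have h2 : G.dist x y ≤ (p'.dropUntil x hx).length := SimpleGraph.dist_le _
    omega
  have heq := hT.IsAcyclic.path_unique ⟨SimpleGraph.Walk.cons hz p, hp.cons hxp⟩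
    ⟨SimpleGraph.Walk.cons hz' p', hp'.cons hxp'⟩
  have hsupp := congr_arg (fun w : G.Path x y => w.val.support) heq
  simp only [SimpleGraph.Walk.support_cons] at hsupp
  rw [p.support_eq_cons, p'.support_eq_cons] at hsupp
  exact (List.cons_eq_cons.mp (List.cons_injective.eq_iff.mp hsupp)).1

open DirectSum

theorem stmt2_aux {V : Type} [DecidableEq V] (G : SimpleGraph V) (hT : G.IsTree)
    (R : Type) [CommRing R]
    (F0 : V → Type) [∀ v, AddCommGroup (F0 v)] [∀ v, Module R (F0 v)]
    (F1 : G.edgeSet → Type) [∀ e, AddCommGroup (F1 e)] [∀ e, Module R (F1 e)]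
    (r : ∀ (e : G.edgeSet) (v : V), v ∈ (e : Sym2 V) → (F1 e →ₗ[R] F0 v))
    (hinj : ∀ e v h, Function.Injective (r e v h))
    (d : (⨁ e, F1 e) →ₗ[R] ⨁ v, F0 v)
    (hd : ∀ (a b : V) (hab : G.Adj a b) (f : F1 ⟨s(a, b), (G.mem_edgeSet).mpr hab⟩),
      d (DirectSum.lof R G.edgeSet F1 ⟨s(a, b), (G.mem_edgeSet).mpr hab⟩ f)
        = DirectSum.lof R V F0 a
            (r ⟨s(a, b), (G.mem_edgeSet).mpr hab⟩ a (Sym2.mem_mk_left a b) f)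
          + DirectSum.lof R V F0 b
            (r ⟨s(a, b), (G.mem_edgeSet).mpr hab⟩ b (Sym2.mem_mk_right a b) f))
    (y : V) (c : ⨁ e, F1 e)
    (hsupp : ∀ x : V, x ≠ y → (d c) x = 0) : c = 0 := by
  classical
  by_contra hc
  have hsne : (DFinsupp.support c).Nonempty := by
    rw [Finset.nonempty_iff_ne_empty]
    exact fun h => hc (DFinsupp.support_eq_empty.mp h)
  set s := DFinsupp.support c with hs
  let D : G.edgeSet → ℕ := fun e =>
    Sym2.lift ⟨fun a b => max (G.dist a y) (G.dist b y), fun a b => max_comm _ _⟩ (e : Sym2 V)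
  obtain ⟨e0, he0s, he0max⟩ := Finset.exists_max_image s D hsne
  obtain ⟨a, b, hab, hba⟩ : ∃ a b : V, (e0 : Sym2 V) = s(a, b) ∧ G.dist b y ≤ G.dist a y := by
    obtain ⟨a, b, h⟩ : ∃ a b : V, (e0 : Sym2 V) = s(a, b) := by
      induction' he : (e0 : Sym2 V) using Sym2.ind with a b
      exact ⟨a, b, rfl⟩
    rcases le_total (G.dist b y) (G.dist a y) with h' | h'
    · exact ⟨a, b, h, h'⟩
    · exact ⟨b, a, h.trans Sym2.eq_swap, h'⟩
  have hadj : G.Adj a b := G.mem_edgeSet.mp (hab ▸ e0.prop)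
  have hD0 : D e0 = G.dist a y := by
    simp only [D, hab, Sym2.lift_mk]
    exact max_eq_left hba
  have hconn := hT.isConnected
  have htri : G.dist a y ≤ G.dist b y + 1 := by
    have h1 := hconn.dist_triangle (u := a) (v := b) (w := y)
    have h2 : G.dist a b = 1 := SimpleGraph.dist_eq_one_iff_adj.mpr hadj
    omega
  have hne := tree_adj_dist_ne hT hadj (y := y)
  have hdb : G.dist b y + 1 = G.dist a y := by omega
  have hay : a ≠ y := by
    intro h
    rw [h, SimpleGraph.dist_self] at hdb
    omega
  -- a is a leaf of the support
  have hleaf : ∀ e ∈ s, a ∈ (e : Sym2 V) → e = e0 := by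
    intro e hes ha
    obtain ⟨z, hz⟩ := Sym2.mem_iff_exists.mp ha
    have hadjz : G.Adj a z := G.mem_edgeSet.mp (hz ▸ e.prop)
    have hDe : D e = max (G.dist a y) (G.dist z y) := by
      simp only [D, hz, Sym2.lift_mk]
    have hle : G.dist z y ≤ G.dist a y := by
      have := he0max e hes
      rw [hD0, hDe] at this
      exact le_trans (le_max_right _ _) this
    have htriz : G.dist a y ≤ G.dist z y + 1 := by
      have h1 := hconn.dist_triangle (u := a) (v := z) (w := y)
      have h2 : G.dist a z = 1 := SimpleGraph.dist_eq_one_iff_adj.mpr hadjz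
      omega
    have hnez := tree_adj_dist_ne hT hadjz (y := y)
    have hdz : G.dist z y + 1 = G.dist a y := by omega
    have : z = b := tree_parent_unique hT hadjz hadj hdz hdb
    apply Subtype.ext
    rw [hz, this, hab]
  have he0 : e0 = ⟨s(a, b), (G.mem_edgeSet).mpr hadj⟩ := Subtype.ext hab
  -- decompose c over its support
  have hsum : (∑ e ∈ s, DirectSum.of F1 e (c e)) = c := DirectSum.sum_support_of c
  have hdc : (d c) a = ∑ e ∈ s, (d (DirectSum.of F1 e (c e))) a := by
    conv_lhs => rw [← hsum]
    rw [map_sum, DFinsupp.finset_sum_apply]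
  have hterm : ∀ e ∈ s, e ≠ e0 → (d (DirectSum.of F1 e (c e))) a = 0 := by
    intro e hes hene
    have hane : a ∉ (e : Sym2 V) := fun ha => hene (hleaf e hes ha)
    obtain ⟨a', b', hab'⟩ : ∃ a' b' : V, (e : Sym2 V) = s(a', b') := by
      induction' he : (e : Sym2 V) using Sym2.ind with a' b'
      exact ⟨a', b', rfl⟩
    have hadj' : G.Adj a' b' := G.mem_edgeSet.mp (hab' ▸ e.prop)
    have he' : e = ⟨s(a', b'), (G.mem_edgeSet).mpr hadj'⟩ := Subtype.ext hab'
    rw [he', ← DirectSum.lof_eq_of R, hd a' b' hadj']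
    have ha' : a' ≠ a := by
      intro h; exact hane (hab' ▸ (h ▸ Sym2.mem_mk_left a' b'))
    have hb' : b' ≠ a := by
      intro h; exact hane (hab' ▸ (h ▸ Sym2.mem_mk_right a' b'))
    rw [DirectSum.add_apply, DirectSum.lof_eq_of, DirectSum.lof_eq_of,
      DirectSum.of_eq_of_ne _ _ _ ha'.symm, DirectSum.of_eq_of_ne _ _ _ hb'.symm, add_zero]
  have hmain : (d c) a
      = r ⟨s(a, b), (G.mem_edgeSet).mpr hadj⟩ a (Sym2.mem_mk_left a b)
          (c ⟨s(a, b), (G.mem_edgeSet).mpr hadj⟩) := by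
    rw [hdc, Finset.sum_eq_single_of_mem e0 he0s (fun e hes hene => hterm e hes hene)]
    rw [he0, ← DirectSum.lof_eq_of R, hd a b hadj, DirectSum.add_apply,
      DirectSum.lof_eq_of, DirectSum.lof_eq_of, DirectSum.of_eq_same,
      DirectSum.of_eq_of_ne _ _ _ hadj.ne, add_zero]
  have hc0 : c e0 ≠ 0 := (DFinsupp.mem_support_iff).mp he0s
  have h0 : (d c) a = 0 := hsupp a hay
  rw [hmain] at h0
  have hz : c ⟨s(a, b), (G.mem_edgeSet).mpr hadj⟩ = 0 :=
    hinj _ _ _ (by rw [h0, map_zero])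
  exact hc0 (by rw [he0]; exact hz)



open DirectSum

/-- On a tree with injective transition maps, a `1`-chain whose
boundary is supported on a single vertex `y` vanishes; in particular `H₁(X, F) = 0`. -/
theorem stmt2 {V : Type} [DecidableEq V] (G : SimpleGraph V) (hT : G.IsTree)
    (R : Type) [CommRing R]
    (F0 : V → Type) [∀ v, AddCommGroup (F0 v)] [∀ v, Module R (F0 v)]
    (F1 : G.edgeSet → Type) [∀ e, AddCommGroup (F1 e)] [∀ e, Module R (F1 e)]
    (r : ∀ (e : G.edgeSet) (v : V), v ∈ (e : Sym2 V) → (F1 e →ₗ[R] F0 v))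
    (hinj : ∀ e v h, Function.Injective (r e v h))
    (d : (⨁ e, F1 e) →ₗ[R] ⨁ v, F0 v)
    (hd : ∀ (a b : V) (hab : G.Adj a b) (f : F1 ⟨s(a, b), (G.mem_edgeSet).mpr hab⟩),
      d (DirectSum.lof R G.edgeSet F1 ⟨s(a, b), (G.mem_edgeSet).mpr hab⟩ f)
        = DirectSum.lof R V F0 a
            (r ⟨s(a, b), (G.mem_edgeSet).mpr hab⟩ a (Sym2.mem_mk_left a b) f)
          + DirectSum.lof R V F0 b
            (r ⟨s(a, b), (G.mem_edgeSet).mpr hab⟩ b (Sym2.mem_mk_right a b) f))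
    (y : V) (c : ⨁ e, F1 e)
    (hsupp : ∀ x : V, x ≠ y → (d c) x = 0) :
    c = 0 ∧ LinearMap.ker d = ⊥ := by
  refine ⟨stmt2_aux G hT R F0 F1 r hinj d hd y c hsupp, ?_⟩
  rw [LinearMap.ker_eq_bot']
  intro m hm
  exact stmt2_aux G hT R F0 F1 r hinj d hd y m
    (fun x _ => by rw [hm]; rfl)
end

section
/- Let k be a field of characteristic p, let q be a power of p, and let W be a k[GL_2(F_q)]-module that is generated as a k[GL_2(F_q)]-module by its subspace W^{N} of invariants under the subgroup N of upper triangular unipotent matrices. Then W is generated by W^{N} already as a module over the group algebra of the lower triangular unipotent subgroup \bar{N} of GL_2(F_q). -/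
open Matrix

namespace Stmt5Aux

variable {F : Type} [Field F]

def nup (x : F) : GL (Fin 2) F := ⟨!![1,x;0,1], !![1,-x;0,1],
  by ext i j; fin_cases i <;> fin_cases j <;> simp [Matrix.mul_apply, Fin.sum_univ_two],
  by ext i j; fin_cases i <;> fin_cases j <;> simp [Matrix.mul_apply, Fin.sum_univ_two]⟩

def nbar (c : F) : GL (Fin 2) F := ⟨!![1,0;c,1], !![1,0;-c,1],
  by ext i j; fin_cases i <;> fin_cases j <;> simp [Matrix.mul_apply, Fin.sum_univ_two],
  by ext i j; fin_cases i <;> fin_cases j <;> simp [Matrix.mul_apply, Fin.sum_univ_two]⟩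

def wEl : GL (Fin 2) F := ⟨!![0,1;1,0], !![0,1;1,0],
  by ext i j; fin_cases i <;> fin_cases j <;> simp [Matrix.mul_apply, Fin.sum_univ_two],
  by ext i j; fin_cases i <;> fin_cases j <;> simp [Matrix.mul_apply, Fin.sum_univ_two]⟩

def upB (a b d : F) (ha : a ≠ 0) (hd : d ≠ 0) : GL (Fin 2) F :=
  ⟨!![a,b;0,d], !![a⁻¹, -(a⁻¹*b*d⁻¹); 0, d⁻¹],
  by ext i j; fin_cases i <;> fin_cases j <;>
      (simp [Matrix.mul_apply, Fin.sum_univ_two]; try field_simp) <;> ring,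
  by ext i j; fin_cases i <;> fin_cases j <;>
      (simp [Matrix.mul_apply, Fin.sum_univ_two]; try field_simp) <;> ring⟩

lemma nup_mul (x y : F) : nup x * nup y = nup (x + y) := by
  ext i j
  fin_cases i <;> fin_cases j <;>
    (simp [nup, Units.val_mul, Matrix.mul_apply, Fin.sum_univ_two]; try ring)

lemma nup_zero : (nup 0 : GL (Fin 2) F) = 1 := by
  ext i j
  fin_cases i <;> fin_cases j <;> simp [nup]

lemma eq_nup (u : GL (Fin 2) F) (h : u.val 0 0 = 1 ∧ u.val 1 1 = 1 ∧ u.val 1 0 = 0) :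
    u = nup (u.val 0 1) := by
  ext i j
  fin_cases i <;> fin_cases j <;> simp [nup, h.1, h.2.1, h.2.2]

lemma bruhat (x : F) (hx : x ≠ 0) :
    nup x * (wEl : GL (Fin 2) F) =
      nbar x⁻¹ * upB x 1 (-x⁻¹) hx (by simp [hx]) := by
  ext i j
  fin_cases i <;> fin_cases j <;>
    simp [nup, nbar, wEl, upB, Units.val_mul, Matrix.mul_apply, Fin.sum_univ_two, hx]

lemma nup_mul_upB (x a b d : F) (ha : a ≠ 0) (hd : d ≠ 0) :
    nup x * upB a b d ha hd = upB a b d ha hd * nup (a⁻¹ * x * d) := by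
  ext i j
  fin_cases i <;> fin_cases j <;>
    (simp [nup, upB, Units.val_mul, Matrix.mul_apply, Fin.sum_univ_two]; try field_simp) <;> ring

section Rep

variable {k W : Type} [Field k] [AddCommGroup W] [Module k W]
variable (ρ : Representation k (GL (Fin 2) F) W)

/-- the set of N-fixed vectors, as in the statement -/
def Fix : Set W := {v | ∀ u : GL (Fin 2) F,
    (u.val 0 0 = 1 ∧ u.val 1 1 = 1 ∧ u.val 1 0 = 0) → ρ u v = v}

lemma mem_fix_iff {v : W} : v ∈ Fix ρ ↔ ∀ x : F, ρ (nup x) v = v := by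
  constructor
  · intro h x
    exact h (nup x) ⟨rfl, rfl, rfl⟩
  · intro h u hu
    rw [eq_nup u hu]
    exact h _

lemma upB_fix {v : W} (hv : v ∈ Fix ρ) (a b d : F) (ha : a ≠ 0) (hd : d ≠ 0) :
    ρ (upB a b d ha hd) v ∈ Fix ρ := by
  rw [mem_fix_iff] at hv ⊢
  intro x
  calc ρ (nup x) (ρ (upB a b d ha hd) v)
      = ρ (nup x * upB a b d ha hd) v := by simp only [_root_.map_mul, Module.End.mul_apply]
    _ = ρ (upB a b d ha hd * nup (a⁻¹ * x * d)) v := by rw [nup_mul_upB]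
    _ = ρ (upB a b d ha hd) (ρ (nup (a⁻¹ * x * d)) v) := by simp only [_root_.map_mul, Module.End.mul_apply]
    _ = ρ (upB a b d ha hd) v := by rw [hv]

/-- the span of lower-unipotent translates of N-fixed vectors -/
def Mspan : Submodule k W := Submodule.span k
  {w : W | ∃ (g : GL (Fin 2) F) (v : W), v ∈ Fix ρ ∧
    (g.val 0 0 = 1 ∧ g.val 1 1 = 1 ∧ g.val 0 1 = 0) ∧ w = ρ g v}

lemma nbar_smul_mem {v : W} (hv : v ∈ Fix ρ) (c : F) : ρ (nbar c) v ∈ Mspan ρ :=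
  Submodule.subset_span ⟨nbar c, v, hv, ⟨rfl, rfl, rfl⟩, rfl⟩

lemma fix_mem {v : W} (hv : v ∈ Fix ρ) : v ∈ Mspan ρ := by
  refine Submodule.subset_span ⟨1, v, hv, ⟨?_, ?_, ?_⟩, ?_⟩ <;> simp

variable [Fintype F]

/-- KEY: `ρ(w)v ∈ M` for `v` an N-fixed vector. -/
lemma wv_mem {v : W} (hv : v ∈ Fix ρ) : ρ wEl v ∈ Mspan ρ := by
  classical
  set u : W := ∑ x : F, ρ (nup x * wEl) v with hu
  have hufix : u ∈ Fix ρ := by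
    rw [mem_fix_iff]
    intro y
    have : ρ (nup y) u = ∑ x : F, ρ (nup (y + x) * wEl) v := by
      rw [hu, map_sum]
      refine Finset.sum_congr rfl fun x _ => ?_
      calc ρ (nup y) (ρ (nup x * wEl) v) = ρ (nup y * (nup x * wEl)) v := by simp only [_root_.map_mul, Module.End.mul_apply]
        _ = ρ (nup (y + x) * wEl) v := by rw [← mul_assoc, nup_mul]
    rw [this]
    exact Fintype.sum_equiv (Equiv.addLeft y) _ _ (fun x => rfl)
  have hsplit : u = ρ wEl v + ∑ x ∈ Finset.univ.erase (0 : F), ρ (nup x * wEl) v := by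
    rw [hu, ← Finset.add_sum_erase _ _ (Finset.mem_univ (0 : F)), nup_zero, one_mul]
  have hterm : ∀ x ∈ Finset.univ.erase (0 : F), ρ (nup x * wEl) v ∈ Mspan ρ := by
    intro x hx
    have hx0 : x ≠ 0 := Finset.ne_of_mem_erase hx
    rw [bruhat x hx0, _root_.map_mul]
    exact nbar_smul_mem ρ (upB_fix ρ hv _ _ _ _ _) x⁻¹
  have : ρ wEl v = u - ∑ x ∈ Finset.univ.erase (0 : F), ρ (nup x * wEl) v := by
    rw [hsplit]; abel
  rw [this]
  exact Submodule.sub_mem _ (fix_mem ρ hufix) (Submodule.sum_mem _ hterm)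

/-- any `G`-translate of an N-fixed vector is in `M` -/
lemma translate_mem (g : GL (Fin 2) F) {v : W} (hv : v ∈ Fix ρ) : ρ g v ∈ Mspan ρ := by
  have hdet : g.val.det ≠ 0 :=
    ((Matrix.isUnit_iff_isUnit_det _).mp g.isUnit).ne_zero
  rw [Matrix.det_fin_two] at hdet
  by_cases ha : g.val 0 0 = 0
  · -- g = wEl * upB c d b
    have hb : g.val 0 1 ≠ 0 := by intro h; apply hdet; rw [ha, h]; ring
    have hc : g.val 1 0 ≠ 0 := by intro h; apply hdet; rw [ha, h]; ring
    have hg : g = wEl * upB (g.val 1 0) (g.val 1 1) (g.val 0 1) hc hb := by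
      ext i j
      fin_cases i <;> fin_cases j <;>
        simp [wEl, upB, Units.val_mul, Matrix.mul_apply, Fin.sum_univ_two, ha]
    rw [hg, _root_.map_mul]
    exact wv_mem ρ (upB_fix ρ hv _ _ _ _ _)
  · -- g = nbar (c * a⁻¹) * upB a b d'
    set a := g.val 0 0
    set b := g.val 0 1
    set c := g.val 1 0
    set d := g.val 1 1
    have hd' : d - c * a⁻¹ * b ≠ 0 := by
      intro h
      apply hdet
      have : d = c * a⁻¹ * b := by linear_combination h
      rw [this]
      field_simp
      ring
    have hg : g = nbar (c * a⁻¹) * upB a b (d - c * a⁻¹ * b) ha hd' := by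
      ext i j
      fin_cases i <;> fin_cases j <;>
        (simp [nbar, upB, Units.val_mul, Matrix.mul_apply, Fin.sum_univ_two]; try field_simp) <;> rfl
    rw [hg, _root_.map_mul]
    exact nbar_smul_mem ρ (upB_fix ρ hv _ _ _ _ _) _

end Rep
end Stmt5Aux


/-- Let `k` be a field of characteristic `p` and `W` a
`k[GL₂(𝔽_q)]`-module (for `𝔽_q` the finite field with `q = pⁿ` elements) which is
generated by its invariants under the upper triangular unipotent subgroup `N`.
Then `W` is generated by these invariants already as a module over the lower
triangular unipotent subgroup. -/
theorem stmt5 (p : ℕ) (hp : p.Prime) (𝔽 k : Type) [Field 𝔽] [Fintype 𝔽] [CharP 𝔽 p]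
    (hq : ∃ n : ℕ, Fintype.card 𝔽 = p ^ n)
    [Field k] [CharP k p]
    (W : Type) [AddCommGroup W] [Module k W]
    (ρ : Representation k (GL (Fin 2) 𝔽) W)
    (hgen : Submodule.span k
      {w : W | ∃ (g : GL (Fin 2) 𝔽) (v : W),
        (∀ u : GL (Fin 2) 𝔽,
          (u.val 0 0 = 1 ∧ u.val 1 1 = 1 ∧ u.val 1 0 = 0) → ρ u v = v) ∧
        w = ρ g v} = ⊤) :
    Submodule.span k
      {w : W | ∃ (g : GL (Fin 2) 𝔽) (v : W),
        (∀ u : GL (Fin 2) 𝔽,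
          (u.val 0 0 = 1 ∧ u.val 1 1 = 1 ∧ u.val 1 0 = 0) → ρ u v = v) ∧
        (g.val 0 0 = 1 ∧ g.val 1 1 = 1 ∧ g.val 0 1 = 0) ∧
        w = ρ g v} = ⊤ := by
  rw [eq_top_iff, ← hgen, Submodule.span_le]
  rintro w ⟨g, v, hv, rfl⟩
  exact Stmt5Aux.translate_mem ρ g hv
end

section
/- Let X be a tree and let T be an endomorphism of C = ⊕_{x ∈ X^0} G(x) (a direct sum of modules indexed by the vertices) of local type: for every vertex x, T restricted to G(x) is a sum of maps T_{x,y} : G(x) → G(y) over the neighbours y of x, and for every vertex x and every vertex z distant from a fixed edge η, the combined map G(x) → ⊕_{x'} G(x') (sum over neighbours x' of x strictly further from η) is injective. Then for any scalar λ, if b ∈ C has (T − λ)(b) supported on the two vertices of η, then b = 0. -/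
open DirectSum

section TreeLemmas

open SimpleGraph

variable {V : Type} [DecidableEq V] {G : SimpleGraph V}

private lemma path_length_eq_dist (hT : G.IsTree) {u v : V} {p : G.Walk u v}
    (hp : p.IsPath) : p.length = G.dist u v := by
  obtain ⟨q, hq, hql⟩ := hT.isConnected.exists_path_of_dist u v
  have hpq : p = q := congrArg Subtype.val (hT.IsAcyclic.path_unique ⟨p, hp⟩ ⟨q, hq⟩)
  rw [hpq, hql]

private lemma dist_ab_ne (hT : G.IsTree) {a b : V} (hab : G.Adj a b) (v : V) :
    G.dist a v ≠ G.dist b v := by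
  obtain ⟨p, hp, hpl⟩ := hT.isConnected.exists_path_of_dist a v
  by_cases hb : b ∈ p.support
  · have h1 : (p.takeUntil b hb).length = G.dist a b :=
      path_length_eq_dist hT (hp.takeUntil hb)
    have h2 : (p.dropUntil b hb).length = G.dist b v :=
      path_length_eq_dist hT (hp.dropUntil hb)
    have h3 : (p.takeUntil b hb).length + (p.dropUntil b hb).length = p.length := by
      rw [← SimpleGraph.Walk.length_append, p.take_spec hb]
    have h4 : G.dist a b = 1 := SimpleGraph.dist_eq_one_iff_adj.mpr hab
    omega
  · have hcons : (SimpleGraph.Walk.cons hab.symm p).IsPath := hp.cons hb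
    have h1 := path_length_eq_dist hT hcons
    rw [SimpleGraph.Walk.length_cons, hpl] at h1
    omega

private lemma unique_closer (hT : G.IsTree) {a b : V} (hab : G.Adj a b) {y z₁ z₂ : V}
    (h₁ : G.Adj y z₁) (h₂ : G.Adj y z₂)
    (d₁ : min (G.dist a z₁) (G.dist b z₁) + 1 = min (G.dist a y) (G.dist b y))
    (d₂ : min (G.dist a z₂) (G.dist b z₂) + 1 = min (G.dist a y) (G.dist b y)) :
    z₁ = z₂ := by
  have tri : ∀ (e w w' : V), G.Adj w w' → G.dist e w ≤ G.dist e w' + 1 := by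
    intro e w w' hww'
    have := hT.isConnected.dist_triangle (u := e) (v := w') (w := w)
    have h1 : G.dist w' w = 1 := SimpleGraph.dist_eq_one_iff_adj.mpr hww'.symm
    omega
  have key : ∀ (e : V) {z z' : V}, G.Adj y z → G.Adj y z' →
      min (G.dist a y) (G.dist b y) ≤ G.dist e y →
      G.dist e z + 1 = min (G.dist a y) (G.dist b y) →
      G.dist e z' + 1 = min (G.dist a y) (G.dist b y) → z = z' := by
    intro e z z' hz hz' hey he he'
    have hey' : G.dist e y = min (G.dist a y) (G.dist b y) := by
      have := tri e y z hz
      omega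
    obtain ⟨p, hp, hpl⟩ := hT.isConnected.exists_path_of_dist z e
    obtain ⟨p', hp', hpl'⟩ := hT.isConnected.exists_path_of_dist z' e
    have hw : (SimpleGraph.Walk.cons hz p).length = G.dist y e := by
      rw [SimpleGraph.Walk.length_cons, hpl, SimpleGraph.dist_comm (u := z) (v := e),
        SimpleGraph.dist_comm (u := y) (v := e)]
      omega
    have hw' : (SimpleGraph.Walk.cons hz' p').length = G.dist y e := by
      rw [SimpleGraph.Walk.length_cons, hpl', SimpleGraph.dist_comm (u := z') (v := e),
        SimpleGraph.dist_comm (u := y) (v := e)]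
      omega
    have hwp : (SimpleGraph.Walk.cons hz p).IsPath :=
      SimpleGraph.Walk.isPath_of_length_eq_dist _ hw
    have hwp' : (SimpleGraph.Walk.cons hz' p').IsPath :=
      SimpleGraph.Walk.isPath_of_length_eq_dist _ hw'
    have heq : SimpleGraph.Walk.cons hz p = SimpleGraph.Walk.cons hz' p' :=
      congrArg Subtype.val (hT.IsAcyclic.path_unique ⟨_, hwp⟩ ⟨_, hwp'⟩)
    have hs := congrArg SimpleGraph.Walk.support heq
    rw [SimpleGraph.Walk.support_cons, SimpleGraph.Walk.support_cons,
      p.support_eq_cons, p'.support_eq_cons] at hs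
    exact (List.cons.injEq _ _ _ _).mp ((List.cons.injEq _ _ _ _).mp hs).2 |>.1
  rcases min_choice (G.dist a z₁) (G.dist b z₁) with ha1 | hb1 <;>
    rcases min_choice (G.dist a z₂) (G.dist b z₂) with ha2 | hb2
  · exact key a h₁ h₂ (min_le_left _ _) (by omega) (by omega)
  · -- dist a z₁ = ρy - 1, dist b z₂ = ρy - 1 : contradiction
    exfalso
    have t1 := tri a y z₁ h₁
    have t2 := tri b y z₂ h₂
    have l1 : min (G.dist a y) (G.dist b y) ≤ G.dist a y := min_le_left _ _
    have l2 : min (G.dist a y) (G.dist b y) ≤ G.dist b y := min_le_right _ _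
    exact dist_ab_ne hT hab y (by omega)
  · exfalso
    have t1 := tri b y z₁ h₁
    have t2 := tri a y z₂ h₂
    have l1 : min (G.dist a y) (G.dist b y) ≤ G.dist a y := min_le_left _ _
    have l2 : min (G.dist a y) (G.dist b y) ≤ G.dist b y := min_le_right _ _
    exact dist_ab_ne hT hab y (by omega)
  · exact key b h₁ h₂ (min_le_right _ _) (by omega) (by omega)

end TreeLemmas

/-- Let `X` be a tree and `T` an endomorphism of `⊕_{x} G(x)` of
local type: on each summand it is a sum of maps `T_{x,y}` to the neighbouring
summands, and for every vertex `x` the combined map to the neighbours strictly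
further from a fixed edge `η = {a₀, b₀}` is injective.  Then for any scalar `λ`, if
`(T − λ)(b)` is supported on the two vertices of `η`, then `b = 0`. -/
theorem stmt15 {V : Type} [DecidableEq V] (G : SimpleGraph V) (hT : G.IsTree)
    [G.LocallyFinite]
    (R : Type) [CommRing R]
    (M : V → Type) [∀ v, AddCommGroup (M v)] [∀ v, Module R (M v)]
    (Txy : ∀ x y : V, G.Adj x y → (M x →ₗ[R] M y))
    (T : (⨁ v, M v) →ₗ[R] ⨁ v, M v)
    (hTloc : ∀ (x : V) (f : M x),
      T (DirectSum.lof R V M x f)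
        = ∑ y ∈ (G.neighborFinset x).attach,
            DirectSum.lof R V M y.1 (Txy x y.1 ((G.mem_neighborFinset x y.1).mp y.2) f))
    (a₀ b₀ : V) (hab : G.Adj a₀ b₀)
    (hinj : ∀ x : V, Function.Injective (fun f : M x =>
      fun y : {y : V // G.Adj x y ∧
          min (G.dist a₀ y) (G.dist b₀ y) = min (G.dist a₀ x) (G.dist b₀ x) + 1} =>
        Txy x y.1 y.2.1 f))
    (lam : R) (c : ⨁ v, M v)
    (hsupp : ∀ x : V, x ≠ a₀ → x ≠ b₀ → (T c - lam • c) x = 0) :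
    c = 0 := by
  classical
  by_contra hc
  have hS : c.support.Nonempty := by
    rw [Finset.nonempty_iff_ne_empty]
    intro h
    exact hc (DFinsupp.support_eq_empty.mp h)
  obtain ⟨x₀, hx₀S, hmax⟩ :=
    c.support.exists_max_image (fun v => min (G.dist a₀ v) (G.dist b₀ v)) hS
  -- component of T on a single summand
  have hcomp : ∀ (x y : V), (T (DirectSum.lof R V M x (c x))) y
      = if h : G.Adj x y then Txy x y h (c x) else 0 := by
    intro x y
    rw [hTloc, DFinsupp.finset_sum_apply]
    split_ifs with h
    · rw [Finset.sum_eq_single (⟨y, (G.mem_neighborFinset x y).mpr h⟩ :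
        {z // z ∈ G.neighborFinset x})]
      · exact DirectSum.lof_apply R _ _
      · intro b _ hb
        apply DirectSum.of_eq_of_ne
        intro hby
        exact hb (Subtype.ext hby.symm)
      · intro habs; exact absurd (Finset.mem_attach _ _) habs
    · apply Finset.sum_eq_zero
      intro b _
      apply DirectSum.of_eq_of_ne
      intro hby
      exact h (hby ▸ (G.mem_neighborFinset x b.1).mp b.2)
  have hTc : ∀ y : V, (T c) y = ∑ x ∈ c.support, (T (DirectSum.lof R V M x (c x))) y := by
    intro y
    conv_lhs => rw [← DirectSum.sum_support_of c]
    rw [map_sum, DFinsupp.finset_sum_apply]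
    rfl
  -- the main step: each Txy x₀ y (c x₀) vanishes for y a further neighbour
  have hzero : ∀ y : {y : V // G.Adj x₀ y ∧
      min (G.dist a₀ y) (G.dist b₀ y) = min (G.dist a₀ x₀) (G.dist b₀ x₀) + 1},
      Txy x₀ y.1 y.2.1 (c x₀) = 0 := by
    rintro ⟨y, hadj, hd⟩
    have hya : y ≠ a₀ := by
      intro h
      rw [h, SimpleGraph.dist_self] at hd
      omega
    have hyb : y ≠ b₀ := by
      intro h
      rw [h, SimpleGraph.dist_self] at hd
      omega
    have hyS : c y = 0 := by
      by_contra h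
      have := hmax y (DFinsupp.mem_support_iff.mpr h)
      omega
    have heq0 := hsupp y hya hyb
    rw [DirectSum.sub_apply, DFinsupp.smul_apply, hyS, smul_zero, sub_zero, hTc y] at heq0
    have tri : ∀ (e w w' : V), G.Adj w w' → G.dist e w ≤ G.dist e w' + 1 := by
      intro e w w' hww'
      have := hT.isConnected.dist_triangle (u := e) (v := w') (w := w)
      have h1 : G.dist w' w = 1 := SimpleGraph.dist_eq_one_iff_adj.mpr hww'.symm
      omega
    rw [Finset.sum_eq_single_of_mem x₀ hx₀S] at heq0
    · rw [hcomp, dif_pos hadj] at heq0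
      exact heq0
    · intro x hxS hne
      rw [hcomp]
      split_ifs with h
      · exfalso
        apply hne
        have h1 : min (G.dist a₀ x) (G.dist b₀ x)
            ≤ min (G.dist a₀ x₀) (G.dist b₀ x₀) := hmax x hxS
        have t1 := tri a₀ y x h.symm
        have t2 := tri b₀ y x h.symm
        have l1 : min (G.dist a₀ y) (G.dist b₀ y) ≤ G.dist a₀ y := min_le_left _ _
        have l2 : min (G.dist a₀ y) (G.dist b₀ y) ≤ G.dist b₀ y := min_le_right _ _
        exact unique_closer hT hab h.symm hadj.symm (by omega) (by omega)
      · rfl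
  have hfun : (fun y : {y : V // G.Adj x₀ y ∧
        min (G.dist a₀ y) (G.dist b₀ y) = min (G.dist a₀ x₀) (G.dist b₀ x₀) + 1} =>
      Txy x₀ y.1 y.2.1 (c x₀))
      = (fun y : {y : V // G.Adj x₀ y ∧
        min (G.dist a₀ y) (G.dist b₀ y) = min (G.dist a₀ x₀) (G.dist b₀ x₀) + 1} =>
      Txy x₀ y.1 y.2.1 (0 : M x₀)) := by
    funext y
    rw [hzero y, map_zero]
  have := hinj x₀ hfun
  exact DFinsupp.mem_support_iff.mp hx₀S this
end
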